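/- arXiv:2409.13487 — 4 statements merged into one kernel-verified Lean document; each statement's English description precedes it below -/
import Mathlib

section
/- For any R-module M, the projective dimension of M is at most the S-strongly flat dimension of M plus the projective dimension of R_S. -/
open CategoryTheory

universe u

variable (R : Type u) [CommRing R]

/-- `Ext^n_R(M, N) = 0`. -/
def extVanish (n : ℕ) (M N : Type u) [AddCommGroup M] [Module R M]
    [AddCommGroup N] [Module R N] : Prop :=
  Subsingleton (((Ext R (ModuleCat.{u} R) n).obj
    (Opposite.op (ModuleCat.of R M))).obj (ModuleCat.of R N))

/-- `C` is `S`-weakly cotorsion if `Ext^1_R(R_S, C) = 0`. -/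
def IsWeaklyCotorsion (S : Submonoid R) (C : Type u) [AddCommGroup C] [Module R C] : Prop :=
  extVanish R 1 (Localization S) C

/-- `F` is `S`-strongly flat if `Ext^1_R(F, C) = 0` for all `S`-weakly cotorsion `C`. -/
def IsStronglyFlat (S : Submonoid R) (F : Type u) [AddCommGroup F] [Module R F] : Prop :=
  ∀ (C : Type u) [AddCommGroup C] [Module R C], IsWeaklyCotorsion R S C → extVanish R 1 F C

/-- `Tor^R_n(M, N) = 0`. -/
def torVanish (n : ℕ) (M N : Type u) [AddCommGroup M] [Module R M]
    [AddCommGroup N] [Module R N] : Prop :=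
  Subsingleton (((Tor (ModuleCat.{u} R) n).obj (ModuleCat.of R M)).obj (ModuleCat.of R N))

/-- The projective dimension of `M`: the smallest `n` with `Ext^{n+1}_R(M, -) = 0`,
or `∞` if there is no such `n`. -/
noncomputable def pdim (M : Type u) [AddCommGroup M] [Module R M] : ℕ∞ :=
  sInf {n : ℕ∞ | ∃ m : ℕ, n = m ∧
    ∀ (N : Type u) [AddCommGroup N] [Module R N], extVanish R (m + 1) M N}

/-- The flat dimension of `M`: the smallest `n` with `Tor^R_{n+1}(M, -) = 0`,
or `∞` if there is no such `n`. -/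
noncomputable def fdim (M : Type u) [AddCommGroup M] [Module R M] : ℕ∞ :=
  sInf {n : ℕ∞ | ∃ m : ℕ, n = m ∧
    ∀ (N : Type u) [AddCommGroup N] [Module R N], torVanish R (m + 1) M N}

/-- The `S`-strongly flat dimension of `M`: the smallest `n` with
`Ext^{n+1}_R(M, C) = 0` for every `S`-weakly cotorsion `C`, or `∞` otherwise. -/
noncomputable def sfdim (S : Submonoid R) (M : Type u) [AddCommGroup M] [Module R M] : ℕ∞ :=
  sInf {n : ℕ∞ | ∃ m : ℕ, n = m ∧
    ∀ (C : Type u) [AddCommGroup C] [Module R C],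
      IsWeaklyCotorsion R S C → extVanish R (m + 1) M C}

/-! Suppose `Ext^{s+1}(M, C) = 0` for every weakly cotorsion `C` and `Ext^{p+1}(R_S, -) = 0`.
For any `N`, dimension shifting along injective copresentations `0 → N → I → N' → 0` gives
`Ext^1(R_S, Ωᵖ N) ≅ Ext^{p+1}(R_S, N) = 0` for the `p`-th cosyzygy `Ωᵖ N`, so `Ωᵖ N` is weakly
cotorsion, and then `Ext^{s+p+1}(M, N) ≅ Ext^{s+1}(M, Ωᵖ N) = 0`. Since Mathlib's `Ext` is computed
from a projective resolution `P`, dimension shifting is the long exact homology sequence of the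
short exact sequence of Hom complexes `0 → Hom(P, N) → Hom(P, I) → Hom(P, N') → 0`, together with
the exactness of `Hom(P, I)` in positive degrees. -/

namespace CategoryTheory

open Limits

variable {R : Type*} [Ring R] {C : Type*} [Category C] [Abelian C] [Linear R C]

lemma ShortComplex.Exact.map_linearYoneda_obj_of_injective (I : C) [Injective I]
    {S : ShortComplex Cᵒᵖ} (hS : S.Exact) : (S.map ((linearYoneda R C).obj I)).Exact := by
  rw [← ShortComplex.exact_map_iff_of_faithful _ (forget₂ (ModuleCat R) AddCommGrpCat)]
  exact (hS.map (preadditiveYonedaObj I)).map (forget₂ _ AddCommGrpCat)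

lemma ShortComplex.ShortExact.map_linearCoyoneda_obj_of_projective (Q : C) [Projective Q]
    {S : ShortComplex C} (hS : S.ShortExact) :
    (S.map ((linearCoyoneda R C).obj (Opposite.op Q))).ShortExact := by
  apply ShortExact.reflects_shortExact_of_faithful (forget₂ (ModuleCat R) AddCommGrpCat)
  exact (hS.map_of_exact (preadditiveCoyonedaObj Q)).map_of_exact (forget₂ _ AddCommGrpCat)

variable (R)

section HomComplex

variable {α : Type*} [AddRightCancelSemigroup α] [One α]

noncomputable def ChainComplex.linearYonedaMap (P : ChainComplex C α) {Y Y' : C} (f : Y ⟶ Y') :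
    P.linearYonedaObj R Y ⟶ P.linearYonedaObj R Y' where
  f i := ((linearCoyoneda R C).obj (Opposite.op (P.X i))).map f
  comm' i j _ := by
    ext φ
    exact (Category.assoc _ _ _).symm

noncomputable def ChainComplex.linearYonedaShortComplex (P : ChainComplex C α)
    (S : ShortComplex C) : ShortComplex (HomologicalComplex (ModuleCat R) (ComplexShape.up α)) :=
  ShortComplex.mk (P.linearYonedaMap R S.f) (P.linearYonedaMap R S.g) (by
    ext i φ
    exact (Category.assoc _ _ _).trans ((congrArg _ S.zero).trans comp_zero))

lemma ChainComplex.shortExact_linearYonedaShortComplex (P : ChainComplex C α)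
    [∀ i, Projective (P.X i)] {S : ShortComplex C} (hS : S.ShortExact) :
    (P.linearYonedaShortComplex R S).ShortExact :=
  HomologicalComplex.shortExact_of_degreewise_shortExact _ fun i =>
    hS.map_linearCoyoneda_obj_of_projective (R := R) (P.X i)

end HomComplex

lemma ProjectiveResolution.exactAt_linearYonedaObj_succ_of_injective {X : C}
    (P : ProjectiveResolution X) (I : C) [Injective I] (n : ℕ) :
    (P.complex.linearYonedaObj R I).ExactAt (n + 1) := by
  rw [HomologicalComplex.exactAt_iff' _ n (n + 1) (n + 2) (by simp) (by simp)]
  have hP := P.complex_exactAt_succ n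
  rw [HomologicalComplex.exactAt_iff' _ (n + 2) (n + 1) n (by simp) (by simp)] at hP
  -- the short complex of `Hom(P, I)` at `n + 1` is `Hom(-, I)` applied to that of `P` at `n + 1`
  exact hP.op.map_linearYoneda_obj_of_injective I

variable [EnoughProjectives C]

lemma ShortComplex.ShortExact.isZero_Ext_succ_succ_iff {S : ShortComplex C}
    (hS : S.ShortExact) [Injective S.X₂] (X : C) (n : ℕ) :
    IsZero (((Ext R C (n + 2)).obj (Opposite.op X)).obj S.X₁) ↔
      IsZero (((Ext R C (n + 1)).obj (Opposite.op X)).obj S.X₃) := by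
  let P := ProjectiveResolution.of X
  have hT := P.complex.shortExact_linearYonedaShortComplex R hS
  have hI (k : ℕ) := (P.exactAt_linearYonedaObj_succ_of_injective R S.X₂ k).isZero_homology
  rw [(P.isoExt (n + 2) S.X₁).isZero_iff, (P.isoExt (n + 1) S.X₃).isZero_iff]
  constructor
  · intro h
    exact (hT.homology_exact₃ (n + 1) (n + 2) rfl).isZero_X₂ ((hI n).eq_of_src _ _)
      (h.eq_of_tgt _ _)
  · intro h
    exact (hT.homology_exact₁ (n + 1) (n + 2) rfl).isZero_X₂ (h.eq_of_src _ _)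
      ((hI (n + 1)).eq_of_tgt _ _)

lemma isZero_Ext_add_succ_of_isZero_Ext_succ [EnoughInjectives C] {X Y : C} {s : ℕ}
    (hXY : ∀ Z : C, IsZero (((Ext R C 1).obj (Opposite.op Y)).obj Z) →
      IsZero (((Ext R C (s + 1)).obj (Opposite.op X)).obj Z))
    (p : ℕ) {N : C} (hN : IsZero (((Ext R C (p + 1)).obj (Opposite.op Y)).obj N)) :
    IsZero (((Ext R C (s + p + 1)).obj (Opposite.op X)).obj N) := by
  induction p generalizing N with
  | zero => exact hXY N hN
  | succ p ih =>
    let ip := (EnoughInjectives.presentation N).some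
    have := ip.injective
    have hS := ip.shortExact_shortComplex
    exact (hS.isZero_Ext_succ_succ_iff R X (s + p)).mpr
      (ih ((hS.isZero_Ext_succ_succ_iff R Y p).mp hN))

end CategoryTheory

open Limits

lemma exists_eq_sInf_of_sInf_ne_top {P : ℕ → Prop}
    (h : sInf {n : ℕ∞ | ∃ m : ℕ, n = m ∧ P m} ≠ ⊤) :
    ∃ m, P m ∧ sInf {n : ℕ∞ | ∃ m : ℕ, n = m ∧ P m} = m := by
  set A := {n : ℕ∞ | ∃ m : ℕ, n = m ∧ P m}
  have hA : A.Nonempty := Set.nonempty_iff_ne_empty.mpr fun h' => h (by rw [h', sInf_empty])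
  obtain ⟨m, hm, hPm⟩ := csInf_mem hA
  exact ⟨m, hPm, hm⟩

variable {R} in
lemma extVanish_iff_isZero (n : ℕ) (M N : Type u) [AddCommGroup M] [Module R M]
    [AddCommGroup N] [Module R N] :
    extVanish R n M N ↔
      IsZero (((Ext R (ModuleCat.{u} R) n).obj (Opposite.op (ModuleCat.of R M))).obj
        (ModuleCat.of R N)) :=
  ModuleCat.isZero_iff_subsingleton.symm

/-- `pd_R(M) ≤ S-sfd(M) + pd_R(R_S)` for any `R`-module `M`. -/
theorem pdim_le_sfdim_add_pdim_localization (S : Submonoid R)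
    (M : Type u) [AddCommGroup M] [Module R M] :
    pdim R M ≤ sfdim R S M + pdim R (Localization S) := by
  rcases eq_or_ne (sfdim R S M) ⊤ with hs | hs
  · simp [hs]
  rcases eq_or_ne (pdim R (Localization S)) ⊤ with hp | hp
  · simp [hp]
  obtain ⟨s, hsM, hs⟩ := exists_eq_sInf_of_sInf_ne_top hs
  obtain ⟨p, hpL, hp⟩ := exists_eq_sInf_of_sInf_ne_top hp
  rw [show sfdim R S M = s from hs, show pdim R (Localization S) = p from hp, ← Nat.cast_add]
  refine sInf_le ⟨s + p, rfl, fun N _ _ => ?_⟩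
  simp only [IsWeaklyCotorsion, extVanish_iff_isZero] at hsM hpL ⊢
  exact isZero_Ext_add_succ_of_isZero_Ext_succ R (fun Z : ModuleCat.{u} R => hsM Z) p (hpL N)
end

section
/- Suppose the first syzygy of R_S is S-strongly flat and n ≥ 0. If every cyclic R-module has S-strongly flat dimension at most n, then every R-module has S-strongly flat dimension at most n. -/
open CategoryTheory

universe u

variable (R : Type u) [CommRing R]

/-!
Vanishing of the `Ext` used in `extVanish` is compared, through a projective resolution, with
vanishing of Mathlib's `Abelian.Ext`, whose long exact sequences provide dimension shifting.
Shifting along `0 → H → P → R_S → 0` turns strong flatness of `H` into `Ext²(R_S, C) = 0` for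
every weakly cotorsion `C`. Hence the cosyzygy `C'` in `0 → C → E → C' → 0`, `E` injective, is
again weakly cotorsion, and `Ext^{k+1}(M, C') ≅ Ext^{k+2}(M, C)` shows that once
`Ext^{m+1}(M, -)` vanishes on weakly cotorsion modules, so does `Ext^{n+1}(M, -)` for all
`n ≥ m`: `sfdim M ≤ n` means exactly `Ext^{n+1}(M, C) = 0` for weakly cotorsion `C`. Applied to
the cyclic modules `R/I`, this says that `Ext^{n+1}(R/I, C) = 0` for all ideals `I`, and Baer's
criterion on the `n`-th cosyzygy of `C` gives `injdim C ≤ n`, so `Ext^{n+1}(M, C) = 0` for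
every `M`.
-/

universe w

namespace CategoryTheory

namespace ProjectiveResolution

variable {C : Type*} [Category C] [Abelian C] {X : C} (P : ProjectiveResolution X)

lemma subsingleton_ext_succ_iff {A : Type*} [Ring A] [Linear A C] [EnoughProjectives C]
    (Y : C) (k : ℕ) :
    Subsingleton (((Ext A C (k + 1)).obj (Opposite.op X)).obj Y) ↔
      ∀ f : P.complex.X (k + 1) ⟶ Y, P.complex.d (k + 2) (k + 1) ≫ f = 0 →
        ∃ g : P.complex.X k ⟶ Y, P.complex.d (k + 1) k ≫ g = f := by
  rw [← ModuleCat.isZero_iff_subsingleton, (P.isoExt (k + 1) Y).isZero_iff,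
    ← HomologicalComplex.exactAt_iff_isZero_homology,
    HomologicalComplex.exactAt_iff' _ k (k + 1) (k + 2) (by simp) (by simp),
    ShortComplex.moduleCat_exact_iff]
  rfl

lemma subsingleton_abelianExt_succ_iff [HasExt.{w} C] (Y : C) (k : ℕ) :
    Subsingleton (Abelian.Ext X Y (k + 1)) ↔
      ∀ f : P.complex.X (k + 1) ⟶ Y, P.complex.d (k + 2) (k + 1) ≫ f = 0 →
        ∃ g : P.complex.X k ⟶ Y, P.complex.d (k + 1) k ≫ g = f := by
  refine ⟨fun _ f hf ↦ (P.extMk_eq_zero_iff f _ rfl hf k rfl).1 (Subsingleton.elim _ _),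
    fun h ↦ ⟨fun a b ↦ ?_⟩⟩
  obtain ⟨f, hf, rfl⟩ := P.extMk_surjective a _ rfl
  obtain ⟨g, hg, rfl⟩ := P.extMk_surjective b _ rfl
  rw [(P.extMk_eq_zero_iff f _ rfl hf k rfl).2 (h f hf),
    (P.extMk_eq_zero_iff g _ rfl hg k rfl).2 (h g hg)]

end ProjectiveResolution

namespace ShortComplex.ShortExact

open Abelian

variable {C : Type*} [Category C] [Abelian C] [HasExt.{w} C] {S : ShortComplex C}

lemma subsingleton_ext_X₁_succ_succ_iff (hS : S.ShortExact) [Injective S.X₂] (X : C) (n : ℕ) :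
    Subsingleton (Ext X S.X₁ (n + 2)) ↔ Subsingleton (Ext X S.X₃ (n + 1)) := by
  refine ⟨fun _ ↦ subsingleton_of_forall_eq 0 fun x ↦ ?_,
    fun _ ↦ subsingleton_of_forall_eq 0 fun x ↦ ?_⟩
  · obtain ⟨y, rfl⟩ := Ext.covariant_sequence_exact₃ X hS x rfl (Subsingleton.elim _ _)
    rw [Ext.eq_zero_of_injective y, Ext.zero_comp]
  · obtain ⟨y, rfl⟩ := Ext.covariant_sequence_exact₁ X hS x (Ext.eq_zero_of_injective _) rfl
    rw [Subsingleton.elim y 0, Ext.zero_comp]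

lemma subsingleton_ext_X₃_succ_succ_iff (hS : S.ShortExact) [Projective S.X₂] (Y : C)
    (n : ℕ) :
    Subsingleton (Ext S.X₃ Y (n + 2)) ↔ Subsingleton (Ext S.X₁ Y (n + 1)) := by
  refine ⟨fun _ ↦ subsingleton_of_forall_eq 0 fun x ↦ ?_,
    fun _ ↦ subsingleton_of_forall_eq 0 fun x ↦ ?_⟩
  · obtain ⟨y, rfl⟩ := Ext.contravariant_sequence_exact₁ hS Y x (add_comm _ _)
      (Subsingleton.elim _ _)
    rw [Ext.eq_zero_of_projective y, Ext.comp_zero]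
  · obtain ⟨y, rfl⟩ := Ext.contravariant_sequence_exact₃ hS Y x
      (Ext.eq_zero_of_projective _) (add_comm _ _)
    rw [Subsingleton.elim y 0, Ext.comp_zero]

end ShortComplex.ShortExact

end CategoryTheory

namespace CategoryTheory.Injective

open Limits

variable {C : Type*} [Category C] [Abelian C] [EnoughInjectives C] (Y : C)

noncomputable abbrev cosyzygyShortComplex : ShortComplex C :=
  ShortComplex.mk (Injective.ι Y) (cokernel.π _) (cokernel.condition _)

lemma cosyzygyShortComplex_shortExact : (cosyzygyShortComplex Y).ShortExact :=
  { exact := ShortComplex.exact_cokernel _ }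

end CategoryTheory.Injective

namespace ModuleCat

open Abelian

variable {R}

lemma injective_of_subsingleton_ext_quotient (Y : ModuleCat.{u} R)
    (hY : ∀ I : Ideal R, Subsingleton (Abelian.Ext (ModuleCat.of R (R ⧸ I)) Y 1)) :
    Injective Y := by
  suffices Module.Baer R Y from
    Module.injective_object_of_injective_module R Y (inj := this.injective)
  intro I g
  have hS := ModuleCat.shortComplex_shortExact
    (ShortComplex.mk (ModuleCat.ofHom I.subtype) (ModuleCat.ofHom I.mkQ)
      (by ext x; simp [Ideal.Quotient.eq_zero_iff_mem]))
    (LinearMap.exact_subtype_mkQ I) I.injective_subtype I.mkQ_surjective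
  obtain ⟨φ, hφ⟩ := Ext.contravariant_sequence_exact₁ hS Y (Ext.mk₀ (ModuleCat.ofHom g))
    (zero_add 1) (Subsingleton.elim _ _)
  obtain ⟨f, rfl⟩ := Ext.homEquiv₀.symm.surjective φ
  have hf : ModuleCat.ofHom I.subtype ≫ f = ModuleCat.ofHom g :=
    Ext.homEquiv₀.symm.injective (by simpa using hφ)
  exact ⟨f.hom, fun x hx ↦ LinearMap.congr_fun (congrArg Hom.hom hf) ⟨x, hx⟩⟩

lemma hasInjectiveDimensionLT_of_subsingleton_ext_quotient (n : ℕ) (Y : ModuleCat.{u} R)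
    (hY : ∀ I : Ideal R, Subsingleton (Abelian.Ext (ModuleCat.of R (R ⧸ I)) Y (n + 1))) :
    HasInjectiveDimensionLT Y (n + 1) := by
  induction n generalizing Y with
  | zero =>
    have := injective_of_subsingleton_ext_quotient Y hY
    infer_instance
  | succ n ih =>
    have hT := Injective.cosyzygyShortComplex_shortExact Y
    exact (hT.hasInjectiveDimensionLT_X₃_iff n inferInstance).1
      (ih _ fun I ↦ (hT.subsingleton_ext_X₁_succ_succ_iff _ n).1 (hY I))

end ModuleCat

section StronglyFlatDimension

variable {R}

lemma extVanish_succ_iff (k : ℕ) (M N : Type u) [AddCommGroup M] [Module R M]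
    [AddCommGroup N] [Module R N] :
    extVanish R (k + 1) M N ↔
      Subsingleton (Abelian.Ext (ModuleCat.of R M) (ModuleCat.of R N) (k + 1)) := by
  let P := ProjectiveResolution.of (ModuleCat.of R M)
  exact (P.subsingleton_ext_succ_iff _ k).trans (P.subsingleton_abelianExt_succ_iff _ k).symm

lemma extVanish_succ_succ_iff_of_projective {K P X : Type u} [AddCommGroup K] [Module R K]
    [AddCommGroup P] [Module R P] [AddCommGroup X] [Module R X] [Module.Projective R P]
    (i : K →ₗ[R] P) (p : P →ₗ[R] X) (hi : Function.Injective i) (hp : Function.Surjective p)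
    (hip : Function.Exact i p) (n : ℕ) (N : Type u) [AddCommGroup N] [Module R N] :
    extVanish R (n + 2) X N ↔ extVanish R (n + 1) K N := by
  have hS := ModuleCat.shortComplex_shortExact
    (ShortComplex.mk (ModuleCat.ofHom i) (ModuleCat.ofHom p)
      (by ext x; exact hip.apply_apply_eq_zero x)) hip hi hp
  rw [extVanish_succ_iff, extVanish_succ_iff]
  exact hS.subsingleton_ext_X₃_succ_succ_iff _ n

variable (S : Submonoid R) {M : Type u} [AddCommGroup M] [Module R M]

lemma sfdim_le_of_forall_extVanish {n : ℕ}
    (h : ∀ (C : Type u) [AddCommGroup C] [Module R C],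
      IsWeaklyCotorsion R S C → extVanish R (n + 1) M C) :
    sfdim R S M ≤ n :=
  sInf_le ⟨n, rfl, h⟩

lemma exists_forall_extVanish_of_sfdim_le {n : ℕ} (h : sfdim R S M ≤ n) :
    ∃ m ≤ n, ∀ (C : Type u) [AddCommGroup C] [Module R C],
      IsWeaklyCotorsion R S C → extVanish R (m + 1) M C := by
  unfold sfdim at h
  set T : Set ℕ∞ := {d : ℕ∞ | ∃ m : ℕ, d = m ∧
    ∀ (C : Type u) [AddCommGroup C] [Module R C],
      IsWeaklyCotorsion R S C → extVanish R (m + 1) M C}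
  have hT : T.Nonempty := Set.nonempty_iff_ne_empty.2 fun hT ↦ by simp [hT] at h
  obtain ⟨m, hm, hvan⟩ := csInf_mem hT
  exact ⟨m, by exact_mod_cast hm ▸ h, hvan⟩

variable {S} in
lemma IsWeaklyCotorsion.cosyzygy
    (h2 : ∀ (C : Type u) [AddCommGroup C] [Module R C],
      IsWeaklyCotorsion R S C → extVanish R 2 (Localization S) C)
    (Y : ModuleCat.{u} R) (hY : IsWeaklyCotorsion R S Y) :
    IsWeaklyCotorsion R S (Injective.cosyzygyShortComplex Y).X₃ := by
  have hT := Injective.cosyzygyShortComplex_shortExact Y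
  exact (extVanish_succ_iff 0 _ _).2
    ((hT.subsingleton_ext_X₁_succ_succ_iff _ 0).1 ((extVanish_succ_iff 1 _ _).1 (h2 Y hY)))

lemma forall_extVanish_succ_succ
    (h2 : ∀ (C : Type u) [AddCommGroup C] [Module R C],
      IsWeaklyCotorsion R S C → extVanish R 2 (Localization S) C) {m : ℕ}
    (hM : ∀ (C : Type u) [AddCommGroup C] [Module R C],
      IsWeaklyCotorsion R S C → extVanish R (m + 1) M C) :
    ∀ (C : Type u) [AddCommGroup C] [Module R C],
      IsWeaklyCotorsion R S C → extVanish R (m + 2) M C := by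
  intro C _ _ hC
  have hT := Injective.cosyzygyShortComplex_shortExact (ModuleCat.of R C)
  rw [extVanish_succ_iff (m + 1), hT.subsingleton_ext_X₁_succ_succ_iff]
  exact (extVanish_succ_iff m _ _).1 (hM _ (IsWeaklyCotorsion.cosyzygy h2 (.of R C) hC))

lemma sfdim_le_iff
    (h2 : ∀ (C : Type u) [AddCommGroup C] [Module R C],
      IsWeaklyCotorsion R S C → extVanish R 2 (Localization S) C) (n : ℕ) :
    sfdim R S M ≤ n ↔ ∀ (C : Type u) [AddCommGroup C] [Module R C],
      IsWeaklyCotorsion R S C → extVanish R (n + 1) M C := by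
  refine ⟨fun h ↦ ?_, sfdim_le_of_forall_extVanish S⟩
  obtain ⟨m, hmn, hm⟩ := exists_forall_extVanish_of_sfdim_le S h
  clear h
  induction n, hmn using Nat.le_induction with
  | base => exact hm
  | succ k _ ih => exact forall_extVanish_succ_succ S h2 ih

end StronglyFlatDimension

/-- Suppose the first syzygy of `R_S` is `S`-strongly flat. If every cyclic `R`-module
has `S`-strongly flat dimension at most `n`, then every `R`-module has `S`-strongly
flat dimension at most `n`. -/
theorem sfdim_le_of_cyclic (S : Submonoid R) (H P : Type u)
    [AddCommGroup H] [Module R H] [AddCommGroup P] [Module R P]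
    (i : H →ₗ[R] P) (p : P →ₗ[R] Localization S)
    (hi : Function.Injective i) (hp : Function.Surjective p) (hip : Function.Exact i p)
    (hP : Module.Projective R P) (hH : IsStronglyFlat R S H) (n : ℕ)
    (hcyc : ∀ (M : Type u) [AddCommGroup M] [Module R M],
      (∃ x : M, Submodule.span R {x} = ⊤) → sfdim R S M ≤ n) :
    ∀ (M : Type u) [AddCommGroup M] [Module R M], sfdim R S M ≤ n := by
  have h2 : ∀ (C : Type u) [AddCommGroup C] [Module R C],
      IsWeaklyCotorsion R S C → extVanish R 2 (Localization S) C := fun C _ _ hC ↦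
    (extVanish_succ_succ_iff_of_projective i p hi hp hip 0 C).2 (hH C hC)
  intro M _ _
  refine sfdim_le_of_forall_extVanish S fun C _ _ hC ↦ ?_
  have hquot (I : Ideal R) : extVanish R (n + 1) (R ⧸ I) C :=
    (sfdim_le_iff S h2 n).1 (hcyc (R ⧸ I) ⟨1, Ideal.Quotient.span_singleton_one I⟩) C hC
  have : HasInjectiveDimensionLT (ModuleCat.of R C) (n + 1) :=
    ModuleCat.hasInjectiveDimensionLT_of_subsingleton_ext_quotient n _
      fun I ↦ (extVanish_succ_iff n _ _).1 (hquot I)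
  exact (extVanish_succ_iff n M C).2
    (HasInjectiveDimensionLT.subsingleton _ (n + 1) (n + 1) le_rfl _)
end

section
/- Suppose the first syzygy of R_S is S-strongly flat and every R-module has S-strongly flat dimension at most 1. Then every submodule of an S-strongly flat R-module is S-strongly flat. -/
/-
Ext¹(N, C) vanishes because it sits between Ext¹(F, C) and Ext²(F/N, C) in the long exact
sequence of 0 → N → F → F/N → 0. Concretely, Ext^{n+1}(M, C) = 0 iff every map from the
n-th syzygy to C extends to the n-th term of a projective resolution. Choose π : P₀ ↠ F with
kernel K and θ : P₁ → P₀ onto π⁻¹(N); then P₁ ↠ N has kernel ker (π ∘ θ), and P₁ → P₀ ↠ F/N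
starts a resolution of F/N with second syzygy ker θ. An extension of a map ker (π ∘ θ) → C to
P₁ is then assembled from one along ker θ (Ext²(F/N, C) = 0) and one along K (Ext¹(F, C) = 0).
-/

open CategoryTheory

universe u

variable (R : Type u) [CommRing R]

namespace Submodule

variable {R M : Type*} [Ring R] [AddCommGroup M] [Module R M]

def HomExtends (K : Submodule R M) (C : Type*) [AddCommGroup C] [Module R C] : Prop :=
  ∀ φ : K →ₗ[R] C, ∃ h : M →ₗ[R] C, h ∘ₗ K.subtype = φ

theorem range_linearCombination_subtype (K : Submodule R M) :
    LinearMap.range (Finsupp.linearCombination R ((↑) : K → M)) = K := by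
  rw [Finsupp.range_linearCombination, Subtype.range_coe, span_eq]

end Submodule

namespace LinearMap

variable {R A B C P₀ P₁ F : Type*} [Ring R] [AddCommGroup A] [Module R A] [AddCommGroup B]
  [Module R B] [AddCommGroup C] [Module R C] [AddCommGroup P₀] [Module R P₀]
  [AddCommGroup P₁] [Module R P₁] [AddCommGroup F] [Module R F]

theorem exists_comp_eq_of_ker_le {f : A →ₗ[R] B} (hf : Function.Surjective f) {g : A →ₗ[R] C}
    (hfg : ker f ≤ ker g) : ∃ g' : B →ₗ[R] C, g' ∘ₗ f = g :=
  ⟨(ker f).liftQ g hfg ∘ₗ (f.quotKerEquivOfSurjective hf).symm.toLinearMap, by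
    ext x
    simp [quotKerEquivOfSurjective_symm_apply]⟩

theorem homExtends_range_iff {A' : Type*} [AddCommGroup A'] [Module R A'] (d : A →ₗ[R] B)
    (d' : A' →ₗ[R] A) (hd : range d' = ker d) :
    (range d).HomExtends C ↔ ∀ g : A →ₗ[R] C, g ∘ₗ d' = 0 → ∃ h : B →ₗ[R] C, h ∘ₗ d = g := by
  constructor
  · intro H g hg
    obtain ⟨φ, hφ⟩ := exists_comp_eq_of_ker_le d.surjective_rangeRestrict
      (g := g) (by rw [ker_rangeRestrict, ← hd, range_le_ker_iff]; exact hg)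
    obtain ⟨h, hh⟩ := H φ
    exact ⟨h, by rw [← hφ, ← hh, comp_assoc, subtype_comp_codRestrict]⟩
  · intro H φ
    have hdd : d.rangeRestrict ∘ₗ d' = 0 :=
      range_le_ker_iff.mp (hd.trans_le (ker_rangeRestrict d).ge)
    obtain ⟨h, hh⟩ := H (φ ∘ₗ d.rangeRestrict) (by rw [comp_assoc, hdd, comp_zero])
    refine ⟨h, (cancel_right d.surjective_rangeRestrict).mp ?_⟩
    rw [comp_assoc, subtype_comp_codRestrict, hh]

theorem homExtends_ker_comp (π : P₀ →ₗ[R] F) (θ : P₁ →ₗ[R] P₀) (hθ : ker π ≤ range θ)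
    (hπ : (ker π).HomExtends C) (hθC : (ker θ).HomExtends C) :
    (ker (π ∘ₗ θ)).HomExtends C := by
  intro φ
  -- Correct `φ` by an extension `g` of `φ|ker θ`; the difference factors through
  -- `θ : ker (π ∘ θ) ↠ ker π` and extends along `ker π ⊆ P₀`.
  obtain ⟨g, hg⟩ := hθC (φ ∘ₗ Submodule.inclusion (ker_le_ker_comp θ π))
  let θ' : ker (π ∘ₗ θ) →ₗ[R] ker π :=
    (θ ∘ₗ (ker (π ∘ₗ θ)).subtype).codRestrict _ fun x => x.2
  have hθ' : Function.Surjective θ' := by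
    rintro ⟨y, hy⟩
    obtain ⟨x, rfl⟩ := hθ hy
    exact ⟨⟨x, hy⟩, rfl⟩
  obtain ⟨ψ, hψ⟩ := exists_comp_eq_of_ker_le hθ' (g := φ - g ∘ₗ (ker (π ∘ₗ θ)).subtype) (by
    intro x hx
    have hx' : θ x = 0 := congrArg Subtype.val hx
    have hgx : g x = φ x := congr($hg ⟨x, hx'⟩)
    simp [hgx])
  obtain ⟨Φ, hΦ⟩ := hπ ψ
  refine ⟨Φ ∘ₗ θ + g, ext fun x => ?_⟩
  have hΦx : Φ (θ x) = ψ (θ' x) := congr($hΦ (θ' x))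
  have hψx : ψ (θ' x) = φ x - g x := congr($hψ x)
  simp [hΦx, hψx]

end LinearMap

namespace CategoryTheory

open Limits

variable {C : Type*} [Category C] [Abelian C] [EnoughProjectives C]

lemma Projective.d_comp_self {X Y : C} (f : X ⟶ Y) : Projective.d f ≫ f = 0 :=
  (Category.assoc _ _ _).trans ((congrArg _ (kernel.condition f)).trans comp_zero)

namespace ProjectiveResolution

noncomputable def ofExactComplex {P₀ P₁ : C} (θ : P₁ ⟶ P₀) : ChainComplex C ℕ :=
  ChainComplex.mk' P₀ P₁ θ fun g => ⟨_, Projective.d g, Projective.d_comp_self g⟩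

lemma ofExactComplex_d_1_0 {P₀ P₁ : C} (θ : P₁ ⟶ P₀) : (ofExactComplex θ).d 1 0 = θ := by
  simp [ofExactComplex]

lemma ofExactComplex_exactAt_succ {P₀ P₁ : C} (θ : P₁ ⟶ P₀) (n : ℕ) :
    (ofExactComplex θ).ExactAt (n + 1) := by
  rw [HomologicalComplex.exactAt_iff' _ (n + 2) (n + 1) n (by simp) (by simp)]
  refine (ShortComplex.exact_iff_of_iso ?_).1 (exact_d_f ((ofExactComplex θ).d (n + 1) n))
  refine ShortComplex.isoMk
    (ChainComplex.mk'XIso P₀ P₁ θ (fun g => ⟨_, Projective.d g, Projective.d_comp_self g⟩) n).symm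
    (Iso.refl _) (Iso.refl _) ?_ ?_
  · exact ((Iso.inv_comp_eq _).2 (ChainComplex.mk'_d _ _ _ _ n)).trans (Category.comp_id _).symm
  · exact (Category.id_comp _).trans (Category.comp_id _).symm

instance ofExactComplex_projective {P₀ P₁ : C} [Projective P₀] [Projective P₁] (θ : P₁ ⟶ P₀)
    (n : ℕ) : Projective ((ofExactComplex θ).X n) := by
  obtain _ | _ | n := n
  · exact ‹Projective P₀›
  · exact ‹Projective P₁›
  · exact Projective.of_iso (ChainComplex.mk'XIso _ _ _ _ n).symm inferInstance

noncomputable def ofExact {Z P₀ P₁ : C} [Projective P₀] [Projective P₁] (θ : P₁ ⟶ P₀)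
    (f : P₀ ⟶ Z) [Epi f] (w : θ ≫ f = 0) (hθf : (ShortComplex.mk θ f w).Exact) :
    ProjectiveResolution Z where
  complex := ofExactComplex θ
  π := (ChainComplex.toSingle₀Equiv _ _).symm ⟨f, by rw [ofExactComplex_d_1_0]; exact w⟩
  quasiIso := ⟨fun n => by
    cases n
    · rw [ChainComplex.quasiIsoAt₀_iff, ShortComplex.quasiIso_iff_of_zeros']
      · refine (ShortComplex.exact_and_epi_g_iff_of_iso ?_).2 ⟨hθf, inferInstance⟩
        refine ShortComplex.isoMk (Iso.refl _) (Iso.refl _) (Iso.refl _) ?_ ?_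
        · exact ((Category.id_comp _).trans (ofExactComplex_d_1_0 θ).symm).trans
            (Category.comp_id _).symm
        · exact ((Category.id_comp _).trans
            (ChainComplex.toSingle₀Equiv_symm_apply_f_zero (C := ofExactComplex θ) f _).symm).trans
            (Category.comp_id _).symm
      all_goals rfl
    · rw [quasiIsoAt_iff_exactAt']
      · apply ofExactComplex_exactAt_succ
      · apply ChainComplex.exactAt_succ_single_obj⟩

end ProjectiveResolution

end CategoryTheory

section ModuleCat

variable {R}

lemma ChainComplex.exactAt_linearYonedaObj_succ_iff (P : ChainComplex (ModuleCat.{u} R) ℕ)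
    (C : ModuleCat.{u} R) (n : ℕ) : (P.linearYonedaObj R C).ExactAt (n + 1) ↔
      ∀ g : P.X (n + 1) →ₗ[R] C, g ∘ₗ (P.d (n + 2) (n + 1)).hom = 0 →
        ∃ h : P.X n →ₗ[R] C, h ∘ₗ (P.d (n + 1) n).hom = g := by
  rw [HomologicalComplex.exactAt_iff' _ n (n + 1) (n + 2) (by simp) (by simp),
    ShortComplex.moduleCat_exact_iff]
  refine ModuleCat.homEquiv.forall_congr fun g => ?_
  refine imp_congr ?_ (ModuleCat.homEquiv.exists_congr fun h => ?_)
  · exact ModuleCat.hom_ext_iff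
  · exact ModuleCat.hom_ext_iff

theorem extVanish_succ_iff_s17 {M C : Type u} [AddCommGroup M] [Module R M] [AddCommGroup C]
    [Module R C] (P : ProjectiveResolution (ModuleCat.of R M)) (n : ℕ) :
    extVanish R (n + 1) M C ↔ (LinearMap.range (P.complex.d (n + 1) n).hom).HomExtends C := by
  rw [extVanish, ← ModuleCat.isZero_iff_subsingleton, (P.isoExt (n + 1) _).isZero_iff,
    ← HomologicalComplex.exactAt_iff_isZero_homology,
    ChainComplex.exactAt_linearYonedaObj_succ_iff,
    LinearMap.homExtends_range_iff _ _
      ((ShortComplex.moduleCat_exact_iff_range_eq_ker _).1 (P.exact_succ n))]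

section Presentation

variable {M P₀ P₁ : Type u} [AddCommGroup M] [Module R M] [AddCommGroup P₀] [Module R P₀]
  [AddCommGroup P₁] [Module R P₁] [Module.Projective R P₀] [Module.Projective R P₁]
  (C : Type u) [AddCommGroup C] [Module R C]
  {θ : P₁ →ₗ[R] P₀} {π : P₀ →ₗ[R] M}

noncomputable def projectiveResolutionOfExact (hπ : Function.Surjective π)
    (hθπ : LinearMap.range θ = LinearMap.ker π) : ProjectiveResolution (ModuleCat.of R M) :=
  have : Epi (ModuleCat.ofHom π) := (ModuleCat.epi_iff_surjective _).2 hπ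
  ProjectiveResolution.ofExact (ModuleCat.ofHom θ) (ModuleCat.ofHom π)
    (ModuleCat.hom_ext (LinearMap.range_le_ker_iff.1 hθπ.le))
    ((ShortComplex.moduleCat_exact_iff_range_eq_ker _).2 hθπ)

lemma projectiveResolutionOfExact_d_1_0 (hπ : Function.Surjective π)
    (hθπ : LinearMap.range θ = LinearMap.ker π) :
    (projectiveResolutionOfExact hπ hθπ).complex.d 1 0 = ModuleCat.ofHom θ :=
  ProjectiveResolution.ofExactComplex_d_1_0 _

theorem extVanish_one_iff_of_exact (hπ : Function.Surjective π)
    (hθπ : LinearMap.range θ = LinearMap.ker π) :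
    extVanish R 1 M C ↔ (LinearMap.ker π).HomExtends C := by
  rw [extVanish_succ_iff_s17 (projectiveResolutionOfExact hπ hθπ) 0,
    projectiveResolutionOfExact_d_1_0]
  change (LinearMap.range θ).HomExtends C ↔ _
  rw [hθπ]

theorem extVanish_two_iff_of_exact (hπ : Function.Surjective π)
    (hθπ : LinearMap.range θ = LinearMap.ker π) :
    extVanish R 2 M C ↔ (LinearMap.ker θ).HomExtends C := by
  let P := projectiveResolutionOfExact hπ hθπ
  have hP : LinearMap.range (P.complex.d 2 1).hom = LinearMap.ker (P.complex.d 1 0).hom :=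
    (ShortComplex.moduleCat_exact_iff_range_eq_ker _).1 (P.exact_succ 0)
  rw [extVanish_succ_iff_s17 P 1, hP, projectiveResolutionOfExact_d_1_0]
  rfl

end Presentation

theorem extVanish_one_iff {M P₀ : Type u} [AddCommGroup M] [Module R M] [AddCommGroup P₀]
    [Module R P₀] [Module.Projective R P₀] (C : Type u) [AddCommGroup C] [Module R C]
    {π : P₀ →ₗ[R] M} (hπ : Function.Surjective π) :
    extVanish R 1 M C ↔ (LinearMap.ker π).HomExtends C :=
  extVanish_one_iff_of_exact C hπ (Submodule.range_linearCombination_subtype (LinearMap.ker π))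

theorem extVanish_one_submodule {F C : Type u} [AddCommGroup F] [Module R F] [AddCommGroup C]
    [Module R C] (N : Submodule R F) (hF : extVanish R 1 F C) (hQ : extVanish R 2 (F ⧸ N) C) :
    extVanish R 1 N C := by
  let π := Finsupp.linearCombination R (id : F → F)
  have hπ : Function.Surjective π := Finsupp.linearCombination_id_surjective R F
  let θ := Finsupp.linearCombination R ((↑) : N.comap π → F →₀ R)
  have hθ : LinearMap.range θ = N.comap π := Submodule.range_linearCombination_subtype _
  have hθN (x) : π (θ x) ∈ N := hθ.le (LinearMap.mem_range_self θ x)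
  let ρ : (N.comap π →₀ R) →ₗ[R] N := (π ∘ₗ θ).codRestrict N hθN
  have hρ : Function.Surjective ρ := by
    rintro ⟨y, hy⟩
    obtain ⟨p, rfl⟩ := hπ y
    obtain ⟨x, rfl⟩ : p ∈ LinearMap.range θ := hθ.ge hy
    exact ⟨x, rfl⟩
  rw [extVanish_one_iff C hρ, LinearMap.ker_codRestrict]
  refine LinearMap.homExtends_ker_comp π θ (hθ.ge.trans' (LinearMap.ker_le_comap π))
    ((extVanish_one_iff C hπ).1 hF) ((extVanish_two_iff_of_exact C (π := N.mkQ ∘ₗ π) ?_ ?_).1 hQ)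
  · exact N.mkQ_surjective.comp hπ
  · rw [hθ, LinearMap.ker_comp, Submodule.ker_mkQ]

end ModuleCat

theorem submodule_stronglyFlat (S : Submonoid R)
    (hdim : ∀ (M C : Type u) [AddCommGroup M] [Module R M] [AddCommGroup C] [Module R C],
      IsWeaklyCotorsion R S C → extVanish R 2 M C) :
    ∀ (F : Type u) [AddCommGroup F] [Module R F], IsStronglyFlat R S F →
      ∀ (N : Submodule R F), IsStronglyFlat R S N := by
  intro F _ _ hF N C _ _ hC
  exact extVanish_one_submodule N (hF C hC) (hdim _ C hC)
end

section
/- If every S-weakly cotorsion R-module has an injective envelope with the unique mapping property, then every S-weakly cotorsion R-module is injective. -/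
open CategoryTheory

universe u

variable (R : Type u) [CommRing R]

/-!
Applying the unique mapping property to the zero map shows that a map out of `E` vanishing on
`C` must vanish. Embedding `E / C` into an injective module then forces `E / C = 0`, so the
envelope `C → E` is an isomorphism and `C` inherits injectivity from `E`.
-/

section

variable {R : Type u} [Ring R]

theorem Module.exists_injective_embedding (M : Type u) [AddCommGroup M] [Module R M] :
    ∃ (J : ModuleCat.{u} R) (ι : M →ₗ[R] J), Module.Injective R J ∧ Function.Injective ι :=
  ⟨Injective.under (ModuleCat.of R M), (Injective.ι (ModuleCat.of R M)).hom,
    Module.injective_module_of_injective_object R _ (inj := Injective.injective_under _),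
    (ModuleCat.mono_iff_injective _).mp inferInstance⟩

theorem Module.Injective.of_linearEquiv {M N : Type u} [AddCommGroup M] [Module R M]
    [AddCommGroup N] [Module R N] [inj : Module.Injective R M] (e : M ≃ₗ[R] N) :
    Module.Injective R N :=
  ((Module.Baer.of_injective inj).of_equiv e).injective

theorem LinearMap.surjective_of_comp_eq_zero_imp_eq_zero {M N : Type u} [AddCommGroup M]
    [Module R M] [AddCommGroup N] [Module R N] (f : M →ₗ[R] N)
    (h : ∀ (E : Type u) [AddCommGroup E] [Module R E], Module.Injective R E →
      ∀ g : N →ₗ[R] E, g ∘ₗ f = 0 → g = 0) :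
    Function.Surjective f := by
  obtain ⟨J, ι, hJ, hι⟩ := Module.exists_injective_embedding (R := R) (N ⧸ LinearMap.range f)
  have hzero : ι ∘ₗ (LinearMap.range f).mkQ = 0 :=
    h J hJ _ (by rw [LinearMap.comp_assoc, LinearMap.range_mkQ_comp, LinearMap.comp_zero])
  rw [← LinearMap.range_eq_top]
  calc LinearMap.range f = LinearMap.ker (ι ∘ₗ (LinearMap.range f).mkQ) := by
        rw [LinearMap.ker_comp_of_ker_eq_bot _ (LinearMap.ker_eq_bot.mpr hι), Submodule.ker_mkQ]
    _ = ⊤ := by rw [hzero, LinearMap.ker_zero]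

theorem Module.Injective.of_existsUnique_factorization {C E : Type u} [AddCommGroup C]
    [Module R C] [AddCommGroup E] [Module R E] [Module.Injective R E] (f : C →ₗ[R] E)
    (hf : Function.Injective f)
    (hump : ∀ (E' : Type u) [AddCommGroup E'] [Module R E'], Module.Injective R E' →
      ∀ g : C →ₗ[R] E', ∃! h : E →ₗ[R] E', h ∘ₗ f = g) :
    Module.Injective R C := by
  have hsurj : Function.Surjective f :=
    f.surjective_of_comp_eq_zero_imp_eq_zero fun E' _ _ hE' g hg ↦
      (hump E' hE' 0).unique hg (LinearMap.zero_comp f)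
  exact Module.Injective.of_linearEquiv (LinearEquiv.ofBijective f ⟨hf, hsurj⟩).symm

end

/-- If every `S`-weakly cotorsion `R`-module has an injective envelope with the unique
mapping property (an injective essential extension `f : C → E` such that every map from
`C` to an injective module factors uniquely through `f`), then every `S`-weakly
cotorsion `R`-module is injective. -/
theorem weaklyCotorsion_injective_of_envelope_ump (S : Submonoid R)
    (henv : ∀ (C : Type u) [AddCommGroup C] [Module R C], IsWeaklyCotorsion R S C →
      ∃ (E : ModuleCat.{u} R) (f : C →ₗ[R] E),
        Module.Injective R E ∧ Function.Injective f ∧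
        (∀ N : Submodule R E, N ≠ ⊥ → N ⊓ LinearMap.range f ≠ ⊥) ∧
        (∀ (E' : Type u) [AddCommGroup E'] [Module R E'], Module.Injective R E' →
          ∀ g : C →ₗ[R] E', ∃! h : E →ₗ[R] E', h.comp f = g)) :
    ∀ (C : Type u) [AddCommGroup C] [Module R C],
      IsWeaklyCotorsion R S C → Module.Injective R C := by
  intro C _ _ hC
  obtain ⟨E, f, hE, hf, -, hump⟩ := henv C hC
  exact Module.Injective.of_existsUnique_factorization f hf hump
end
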